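/- (Compactness for Normal amst I, (1)⇔(3)) Let (M, ⊨, P(L)) be a normal abstract model structure such that L is not finitely satisfiable. Then the amst is compact if and only if every finitely satisfiable set Γ ⊆ L is contained in a maximal satisfiable set (a set Σ ⊇ Γ that is satisfiable and such that no proper superset of Σ is satisfiable). -/

import Mathlib

/-- A set `Γ ⊆ L` is satisfiable in the abstract model structure `(M, R, 𝒫(L))`
if some `m : M` satisfies it. -/
def AmstSat {M L : Type*} (R : M → Set L → Prop) (Γ : Set L) : Prop :=
  ∃ m : M, R m Γ

/-- `Γ` is finitely satisfiable: every finite subset of `Γ` is satisfiable. -/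
def AmstFinSat {M L : Type*} (R : M → Set L → Prop) (Γ : Set L) : Prop :=
  ∀ Γ₀ : Set L, Γ₀ ⊆ Γ → Γ₀.Finite → AmstSat R Γ₀

/-- The abstract model structure is normal. -/
def AmstNormal {M L : Type*} (R : M → Set L → Prop) : Prop :=
  ∀ (m : M) (Γ : Set L), R m Γ ↔ ∀ α ∈ Γ, R m {α}

/-- `Mod(Γ)`, the set of models of `Γ`. -/
def AmstMod {M L : Type*} (R : M → Set L → Prop) (Γ : Set L) : Set M :=
  {m | R m Γ}

/-- The induced consequence relation: `Γ ⊢ α` iff `Mod(Γ) ⊆ Mod({α})`. -/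
def AmstTurn {M L : Type*} (R : M → Set L → Prop) (Γ : Set L) (α : L) : Prop :=
  AmstMod R Γ ⊆ AmstMod R {α}

/-- The abstract model structure is compact. -/
def AmstCompact {M L : Type*} (R : M → Set L → Prop) : Prop :=
  ∀ Γ : Set L, AmstSat R Γ ↔ AmstFinSat R Γ

/-- `Γ` is `⊢`-trivial: `Γ ⊢ α` for every `α`. -/
def AmstTrivial {M L : Type*} (R : M → Set L → Prop) (Γ : Set L) : Prop :=
  ∀ α : L, AmstTurn R Γ α

/-- `Th(X)`, the theory of a set `X` of models. -/
def AmstTh {M L : Type*} (R : M → Set L → Prop) (X : Set M) : Set L :=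
  {α | ∀ m ∈ X, R m {α}}

/-- The subbase `{M \ Mod({α}) | α ∈ L}` generating the topology `τ_N`. -/
def tauN {M L : Type*} (R : M → Set L → Prop) : TopologicalSpace M :=
  TopologicalSpace.generateFrom {U | ∃ α : L, U = (AmstMod R {α})ᶜ}

/-- The topology `τ_C` generated by the collection `{Mod(Γ) | Γ ⊆ L}`. -/
def tauC {M L : Type*} (R : M → Set L → Prop) : TopologicalSpace M :=
  TopologicalSpace.generateFrom {U | ∃ Γ : Set L, U = AmstMod R Γ}

/-- `u` is a `𝒰`-ultramodel of the sequence `m` in the topological space `(M, t)`. -/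
def Ultramodel {M I : Type*} (t : TopologicalSpace M) (m : I → M)
    (𝒰 : Ultrafilter I) (u : M) : Prop :=
  ∀ V : Set M, t.IsOpen V → u ∈ V → {i | m i ∈ V} ∈ 𝒰


lemma amst_sat_mono {M L : Type*} {R : M → Set L → Prop} (hN : AmstNormal R)
    {m : M} {S F : Set L} (h : R m S) (hF : F ⊆ S) : R m F :=
  (hN m F).mpr fun α hα => (hN m S).mp h α (hF hα)

lemma chain_finite_subset {L : Type*} (c : Set (Set L)) (hc : IsChain (· ⊆ ·) c)
    (hne : c.Nonempty) {F : Set L} (hF : F.Finite) (hsub : F ⊆ ⋃₀ c) :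
    ∃ t ∈ c, F ⊆ t := by
  revert hsub
  refine Set.Finite.induction_on (motive := fun s _ => s ⊆ ⋃₀ c → ∃ t ∈ c, s ⊆ t) F hF (fun _ => ⟨hne.choose, hne.choose_spec, by simp⟩) ?_
  intro a s ha hs ih hsub
  · obtain ⟨t, htc, hst⟩ := ih ((Set.subset_insert a s).trans hsub)
    obtain ⟨t', ht'c, hat'⟩ := hsub (Set.mem_insert a s)
    rcases eq_or_ne t t' with rfl | hne'
    · exact ⟨t, htc, Set.insert_subset hat' hst⟩
    rcases hc htc ht'c hne' with h | h
    · exact ⟨t', ht'c, Set.insert_subset hat' (hst.trans h)⟩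
    · exact ⟨t, htc, Set.insert_subset (h hat') hst⟩

/-- (Compactness for Normal amst I, (1)⇔(3)) -/
theorem compact_iff_maxSat {M L : Type*} (R : M → Set L → Prop)
    (hN : AmstNormal R) (hL : ¬ AmstFinSat R (Set.univ : Set L)) :
    AmstCompact R ↔
      ∀ Γ : Set L, AmstFinSat R Γ →
        ∃ S : Set L, Γ ⊆ S ∧ AmstSat R S ∧
          ∀ Δ : Set L, S ⊂ Δ → ¬ AmstSat R Δ := by
  constructor
  · intro hC Γ hΓ
    obtain ⟨mΓ, hmΓ⟩ := (hC Γ).mpr hΓ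
    obtain ⟨S, hS, hmax⟩ := zorn_subset_nonempty {S | Γ ⊆ S ∧ AmstSat R S}
      (fun c hcS hc hcne => by
        refine ⟨⋃₀ c, ⟨?_, ?_⟩, fun s hs => Set.subset_sUnion_of_mem hs⟩
        · exact (hcS hcne.choose_spec).1.trans (Set.subset_sUnion_of_mem hcne.choose_spec)
        · refine (hC _).mpr fun F hF hFfin => ?_
          obtain ⟨t, htc, hFt⟩ := chain_finite_subset c hc hcne hFfin hF
          obtain ⟨m, hm⟩ := (hcS htc).2
          exact ⟨m, amst_sat_mono hN hm hFt⟩)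
      Γ ⟨Set.Subset.rfl, mΓ, hmΓ⟩
    exact ⟨S, hmax.prop.1, hmax.prop.2, fun Δ hΔ hΔsat =>
      hΔ.not_subset (hmax.le_of_ge ⟨hmax.prop.1.trans hΔ.subset, hΔsat⟩ hΔ.subset)⟩
  · intro h Γ
    constructor
    · rintro ⟨m, hm⟩ F hF _
      exact ⟨m, amst_sat_mono hN hm hF⟩
    · intro hΓ
      obtain ⟨S, hΓS, ⟨m, hm⟩, -⟩ := h Γ hΓ
      exact ⟨m, amst_sat_mono hN hm hΓS⟩
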